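/- In the augmented layered graph with nonnegative edge weights, the minimum weight over all STARs for client c equals min_{p∈V} [SPW(s₁,p₁) + SPW(o₁',p₁') + w_{p₁p₂} + SPW(p₂,d₂)], and this minimum can be computed with three single-source shortest path computations (from s₁, from o₁', and from d₂ on the reversed graph) followed by a minimization over |V| processing locations. -/

import Mathlib

/-- Nodes of the augmented layered graph: live pipeline (layer 1), static pipeline
(layer 1), output pipeline (layer 2), and the super static source `o₁'`. -/
inductive ALGNode (V : Type*) where
  | live : V → ALGNode V
  | sta : V → ALGNode V
  | out : V → ALGNode V
  | src : ALGNode V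
deriving DecidableEq

/-- The total weight of a walk `[v₀, v₁, …, v_k]`: `Σ w(v_i, v_{i+1})`. -/
def pathWeight {N : Type*} (w : N → N → ℝ) : List N → ℝ
  | a :: b :: rest => w a b + pathWeight w (b :: rest)
  | _ => 0

/-- `IsWalk E u v l`: `l` is a directed walk from `u` to `v` along edges of `E`. -/
def IsWalk {N : Type*} (E : N → N → Prop) (u v : N) (l : List N) : Prop :=
  l.Chain' E ∧ l.head? = some u ∧ l.getLast? = some v

/-- Shortest-path weight from `u` to `v` in the weighted graph. -/
noncomputable def SPW {N : Type*} (E : N → N → Prop) (w : N → N → ℝ) (u v : N) : ℝ :=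
  sInf {c : ℝ | ∃ l : List N, IsWalk E u v l ∧ c = pathWeight w l}

/-!
With nonnegative weights, erasing a cycle from a walk never increases its weight, so the
infimum of the weights of the acyclic walks from `u` to `v` is already `SPW(u, v)`. The three
legs of a STAR with processing location `p` are chosen independently of each other, so STARs
through `p` approximate `SPW(s₁,p₁) + SPW(o₁',p₁') + w_{p₁p₂} + SPW(p₂,d₂)` from above to
within any `ε > 0` and never go below it; the infimum over all STARs is therefore the minimum
of these quantities over the finitely many `p`.
-/

namespace List

theorem exists_eq_append_cons_append_cons_of_not_nodup {α : Type*} {l : List α}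
    (h : ¬l.Nodup) : ∃ l₁ x l₂ l₃, l = l₁ ++ x :: (l₂ ++ x :: l₃) := by
  induction l with
  | nil => simp at h
  | cons a t ih =>
    by_cases ha : a ∈ t
    · obtain ⟨t₁, t₂, rfl⟩ := append_of_mem ha
      exact ⟨[], a, t₁, t₂, rfl⟩
    · obtain ⟨l₁, x, l₂, l₃, rfl⟩ := ih fun hn => h (nodup_cons.2 ⟨ha, hn⟩)
      exact ⟨a :: l₁, x, l₂, l₃, rfl⟩

end List

section Walks

variable {N : Type*} {E : N → N → Prop} {w : N → N → ℝ}

theorem pathWeight_nonneg (hw : ∀ u v, 0 ≤ w u v) : ∀ l, 0 ≤ pathWeight w l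
  | [] | [_] => le_rfl
  | a :: b :: t => add_nonneg (hw a b) (pathWeight_nonneg hw (b :: t))

theorem pathWeight_append_cons (w : N → N → ℝ) (x : N) (m : List N) :
    ∀ l : List N, pathWeight w (l ++ x :: m) = pathWeight w (l ++ [x]) + pathWeight w (x :: m)
  | [] | [_] => by simp [pathWeight]
  | a :: b :: t => by
    simp only [List.cons_append, pathWeight]
    rw [← List.cons_append, pathWeight_append_cons w x m (b :: t), List.cons_append]
    ring

theorem pathWeight_shortcut_le (hw : ∀ u v, 0 ≤ w u v) (l₁ l₂ l₃ : List N) (x : N) :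
    pathWeight w (l₁ ++ x :: l₃) ≤ pathWeight w (l₁ ++ x :: (l₂ ++ x :: l₃)) := by
  have hcycle := pathWeight_append_cons w x l₃ (x :: l₂)
  rw [List.cons_append] at hcycle
  rw [pathWeight_append_cons w x l₃ l₁, pathWeight_append_cons w x (l₂ ++ x :: l₃) l₁,
    hcycle]
  linarith [pathWeight_nonneg hw (x :: l₂ ++ [x])]

theorem IsWalk.shortcut {u v x : N} {l₁ l₂ l₃ : List N}
    (h : IsWalk E u v (l₁ ++ x :: (l₂ ++ x :: l₃))) : IsWalk E u v (l₁ ++ x :: l₃) := by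
  obtain ⟨hc, hu, hv⟩ := h
  refine ⟨?_, ?_, ?_⟩
  · have hc := List.isChain_split.1 hc
    exact List.isChain_split.2 ⟨hc.1, (List.isChain_cons_split.1 hc.2).2⟩
  · cases l₁ <;> simpa using hu
  · rw [List.getLast?_append_cons, ← List.cons_append, List.getLast?_append_cons] at hv
    rwa [List.getLast?_append_cons]

theorem IsWalk.exists_nodup_pathWeight_le (hw : ∀ u v, 0 ≤ w u v) {u v : N} {l : List N}
    (h : IsWalk E u v l) :
    ∃ l', IsWalk E u v l' ∧ l'.Nodup ∧ pathWeight w l' ≤ pathWeight w l := by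
  induction hl : l.length using Nat.strong_induction_on generalizing l with
  | _ n ih =>
    by_cases hnd : l.Nodup
    · exact ⟨l, h, hnd, le_rfl⟩
    obtain ⟨l₁, x, l₂, l₃, rfl⟩ := List.exists_eq_append_cons_append_cons_of_not_nodup hnd
    obtain ⟨l', h', hnd', hle⟩ := ih _ (by simp [← hl]) h.shortcut rfl
    exact ⟨l', h', hnd', hle.trans (pathWeight_shortcut_le hw l₁ l₂ l₃ x)⟩

theorem SPW_le_pathWeight (hw : ∀ u v, 0 ≤ w u v) {u v : N} {l : List N} (h : IsWalk E u v l) :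
    SPW E w u v ≤ pathWeight w l :=
  csInf_le ⟨0, by rintro c ⟨l, -, rfl⟩; exact pathWeight_nonneg hw l⟩ ⟨l, h, rfl⟩

theorem exists_nodup_walk_pathWeight_lt_SPW_add (hw : ∀ u v, 0 ≤ w u v) {u v : N}
    (hne : ∃ l, IsWalk E u v l) {ε : ℝ} (hε : 0 < ε) :
    ∃ l, IsWalk E u v l ∧ l.Nodup ∧ pathWeight w l < SPW E w u v + ε := by
  obtain ⟨l₀, h₀⟩ := hne
  obtain ⟨_, ⟨l, h, rfl⟩, hlt⟩ := Real.lt_sInf_add_pos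
    (s := {c | ∃ l, IsWalk E u v l ∧ c = pathWeight w l}) ⟨_, l₀, h₀, rfl⟩ hε
  obtain ⟨l', h', hnd, hle⟩ := h.exists_nodup_pathWeight_le hw
  exact ⟨l', h', hnd, hle.trans_lt hlt⟩

end Walks

theorem csInf_eq_inf'_of_forall_exists_le_of_forall_exists_lt {α ι : Type*}
    [ConditionallyCompleteLinearOrder α] [DenselyOrdered α] [NoMaxOrder α]
    {S : Set α} {s : Finset ι}
    (hs : s.Nonempty) (f : ι → α) (hle : ∀ c ∈ S, ∃ i ∈ s, f i ≤ c)
    (hlt : ∀ i ∈ s, ∀ a, f i < a → ∃ c ∈ S, c < a) : sInf S = s.inf' hs f := by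
  obtain ⟨i₀, hi₀⟩ := hs
  obtain ⟨a₀, ha₀⟩ := exists_gt (f i₀)
  obtain ⟨c₀, hc₀, -⟩ := hlt i₀ hi₀ a₀ ha₀
  refine IsGLB.csInf_eq ⟨fun c hc => ?_, fun b hb => ?_⟩ ⟨c₀, hc₀⟩
  · obtain ⟨i, hi, hic⟩ := hle c hc
    exact (Finset.inf'_le f hi).trans hic
  · refine Finset.le_inf' _ _ fun i hi => le_of_forall_gt_imp_ge_of_dense fun a ha => ?_
    obtain ⟨c, hc, hca⟩ := hlt i hi a ha
    exact (hb hc).trans hca.le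

theorem min_STAR_decomposition_general {V : Type*} [Fintype V] [Nonempty V]
    (E : ALGNode V → ALGNode V → Prop) (w : ALGNode V → ALGNode V → ℝ)
    (hw : ∀ u v, 0 ≤ w u v)
    (wproc : V → ℝ)
    (s d : V)
    (hex1 : ∀ p : V, ∃ l, IsWalk E (.live s) (.live p) l ∧ l.Nodup)
    (hex2 : ∀ p : V, ∃ l, IsWalk E .src (.sta p) l ∧ l.Nodup)
    (hex3 : ∀ p : V, ∃ l, IsWalk E (.out p) (.out d) l ∧ l.Nodup) :
    sInf {c : ℝ | ∃ (p : V) (l1 l1' l2 : List (ALGNode V)),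
        IsWalk E (.live s) (.live p) l1 ∧ l1.Nodup ∧
        IsWalk E .src (.sta p) l1' ∧ l1'.Nodup ∧
        IsWalk E (.out p) (.out d) l2 ∧ l2.Nodup ∧
        c = pathWeight w l1 + pathWeight w l1' + wproc p + pathWeight w l2}
      = Finset.univ.inf' Finset.univ_nonempty
          (fun p : V => SPW E w (.live s) (.live p) + SPW E w .src (.sta p)
            + wproc p + SPW E w (.out p) (.out d)) := by
  refine csInf_eq_inf'_of_forall_exists_le_of_forall_exists_lt _ _ ?_ ?_
  · rintro c ⟨p, l1, l1', l2, h1, -, h2, -, h3, -, rfl⟩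
    refine ⟨p, Finset.mem_univ p, ?_⟩
    linarith [SPW_le_pathWeight hw h1, SPW_le_pathWeight hw h2, SPW_le_pathWeight hw h3]
  · intro p _ a ha
    have hε : 0 < (a - _) / 3 := div_pos (sub_pos.2 ha) three_pos
    obtain ⟨l1, h1, h1n, hlt1⟩ :=
      exists_nodup_walk_pathWeight_lt_SPW_add hw ((hex1 p).imp fun _ => And.left) hε
    obtain ⟨l1', h2, h2n, hlt2⟩ :=
      exists_nodup_walk_pathWeight_lt_SPW_add hw ((hex2 p).imp fun _ => And.left) hε
    obtain ⟨l2, h3, h3n, hlt3⟩ :=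
      exists_nodup_walk_pathWeight_lt_SPW_add hw ((hex3 p).imp fun _ => And.left) hε
    exact ⟨_, ⟨p, l1, l1', l2, h1, h1n, h2, h2n, h3, h3n, rfl⟩, by linarith⟩

/-- In the (weighted) augmented layered graph with nonnegative edge weights, the
minimum weight over all STARs for client `c = (s,d,φ)` — a STAR consisting of a
processing location `p`, acyclic paths `σ₁ : s₁ → p₁`, `σ₁' : o₁' → p₁'`,
`σ₂ : p₂ → d₂`, and the processing edges of weight `w_{p₁p₂}` (and zero for
`(p₁',p₂)`) — equals `min_{p∈V} [SPW(s₁,p₁) + SPW(o₁',p₁') + w_{p₁p₂} + SPW(p₂,d₂)]`: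
the exchange between the min over STARs and its decomposition by processing location
(so it is computable by three single-source shortest-path computations followed by a
minimization over the `|V|` processing locations). -/
theorem min_STAR_decomposition {V : Type*} [Fintype V] [Nonempty V]
    (E : ALGNode V → ALGNode V → Prop) (w : ALGNode V → ALGNode V → ℝ)
    (hw : ∀ u v, 0 ≤ w u v)
    (wproc : V → ℝ) (hwproc : ∀ p, wproc p = w (.live p) (.out p))
    (hwproc' : ∀ p, 0 ≤ wproc p)
    (s d : V)
    (hex1 : ∀ p : V, ∃ l, IsWalk E (.live s) (.live p) l ∧ l.Nodup)
    (hex2 : ∀ p : V, ∃ l, IsWalk E .src (.sta p) l ∧ l.Nodup)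
    (hex3 : ∀ p : V, ∃ l, IsWalk E (.out p) (.out d) l ∧ l.Nodup) :
    sInf {c : ℝ | ∃ (p : V) (l1 l1' l2 : List (ALGNode V)),
        IsWalk E (.live s) (.live p) l1 ∧ l1.Nodup ∧
        IsWalk E .src (.sta p) l1' ∧ l1'.Nodup ∧
        IsWalk E (.out p) (.out d) l2 ∧ l2.Nodup ∧
        c = pathWeight w l1 + pathWeight w l1' + wproc p + pathWeight w l2}
      = Finset.univ.inf' Finset.univ_nonempty
          (fun p : V => SPW E w (.live s) (.live p) + SPW E w .src (.sta p)
            + wproc p + SPW E w (.out p) (.out d)) :=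
  min_STAR_decomposition_general E w hw wproc s d hex1 hex2 hex3
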